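/- arXiv:2310.01802 — 6 statements merged into one kernel-verified Lean document; each statement's English description precedes it below -/
import Mathlib

section
/- For every k ∈ {0, 1, …, H} and every x ∈ X, the abstraction value satisfies V_k(x) ≤ γ_k(x). Consequently, 1 − γ_0(x_0) is a lower bound on the probabilistic safety 1 − V_0(x_0) for every initial state x_0 ∈ X. -/
open MeasureTheory ProbabilityTheory

/-- **Theorem (abstraction soundness for a fixed policy).**
For every `k ∈ {0,…,H}` and every `x ∈ X`, the unsafety value satisfies
`V_k(x) ≤ γ_k(x)`; consequently `1 - γ_0(x₀)` is a lower bound on the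
probabilistic safety `1 - V_0(x₀)` for every initial state `x₀`. -/
theorem abstraction_soundness_fixed_policy
    {X : Type*} [MeasurableSpace X] [StandardBorelSpace X]
    -- the partition `X_1, …, X_{n_p}, X_{n_p+1}` of `X`
    (np : ℕ) (P : Fin (np + 1) → Set X)
    (hPmeas : ∀ i, MeasurableSet (P i))
    (hPne : ∀ i, (P i).Nonempty)
    (hPdisj : Pairwise (Function.onFun Disjoint P))
    (hPcover : ⋃ i, P i = Set.univ)
    -- unsafe region `X_u = X_{n_p+1}` and safe set `X_s`
    (Xu Xs : Set X)
    (hXu : Xu = P (Fin.last np))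
    (hXs : Xs = Set.univ \ Xu)
    -- horizon and closed-loop Markov kernels under the fixed policy
    (H : ℕ)
    (T : ℕ → Kernel X X)
    (hT : ∀ k, IsMarkovKernel (T k))
    -- unsafety value functions `V_k`
    (V : ℕ → X → ℝ)
    (hVH : ∀ x, V H x = Xu.indicator (fun _ => (1 : ℝ)) x)
    (hVk : ∀ k < H, ∀ x,
      V k x = Xu.indicator (fun _ => (1 : ℝ)) x +
        Xs.indicator (fun _ => (1 : ℝ)) x * ∫ y, V (k + 1) y ∂((T k) x))
    -- piecewise-constant abstraction values `γ_{k,i}`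
    (γ : ℕ → Fin (np + 1) → ℝ)
    (hγH : ∀ i, γ H i = ⨆ x : P i, Xu.indicator (fun _ => (1 : ℝ)) (x : X))
    (hγk : ∀ k < H, ∀ i, γ k i =
      ⨆ x : P i, (Xu.indicator (fun _ => (1 : ℝ)) (x : X) +
        Xs.indicator (fun _ => (1 : ℝ)) (x : X) *
          ∑ j, γ (k + 1) j * ((T k) (x : X) (P j)).toReal))
    -- the piecewise-constant function `γ_k(x) = γ_{k,i}` for `x ∈ X_i`
    (γfun : ℕ → X → ℝ)
    (hγfun : ∀ k, ∀ x, ∀ i : Fin (np + 1), x ∈ P i → γfun k x = γ k i) :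
    (∀ k ≤ H, ∀ x : X, V k x ≤ γfun k x) ∧
      ∀ x0 : X, 1 - γfun 0 x0 ≤ 1 - V 0 x0 := by

  classical
  have hmem : ∀ x : X, ∃ i, x ∈ P i := by
    intro x
    have hx : x ∈ ⋃ i, P i := hPcover ▸ Set.mem_univ x
    simpa [Set.mem_iUnion] using hx
  have hind0 : ∀ (S : Set X) (x : X), 0 ≤ S.indicator (fun _ => (1 : ℝ)) x := by
    intro S x; by_cases h : x ∈ S <;> simp [Set.indicator_apply, h]
  have hind1 : ∀ (S : Set X) (x : X), S.indicator (fun _ => (1 : ℝ)) x ≤ 1 := by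
    intro S x; by_cases h : x ∈ S <;> simp [Set.indicator_apply, h]
  have key : ∀ d k, k + d = H →
      (∀ i, 0 ≤ γ k i) ∧ (∀ x, V k x ≤ γfun k x) := by
    intro d
    induction d with
    | zero =>
      intro k hk
      obtain rfl : k = H := by omega
      have hbdd : ∀ i : Fin (np + 1), BddAbove
          (Set.range fun x : P i => Xu.indicator (fun _ => (1 : ℝ)) (x : X)) := by
        intro i
        exact ⟨1, by rintro _ ⟨x, rfl⟩; exact hind1 _ _⟩
      constructor
      · intro i
        obtain ⟨x0, hx0⟩ := hPne i
        have h1 : Xu.indicator (fun _ => (1 : ℝ)) x0 ≤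
            ⨆ x : P i, Xu.indicator (fun _ => (1 : ℝ)) (x : X) :=
          le_ciSup (hbdd i) ⟨x0, hx0⟩
        rw [hγH i]
        exact (hind0 Xu x0).trans h1
      · intro x
        obtain ⟨i, hi⟩ := hmem x
        rw [hγfun _ x i hi, hVH x, hγH i]
        exact le_ciSup (hbdd i) ⟨x, hi⟩
    | succ d ih =>
      intro k hk
      have hkH : k < H := by omega
      obtain ⟨hγpos, hVle⟩ := ih (k + 1) (by omega)
      haveI := hT k
      set S : X → ℝ := fun z => ∑ j, γ (k + 1) j * ((T k) z (P j)).toReal with hS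
      have hS0 : ∀ z, 0 ≤ S z := by
        intro z
        exact Finset.sum_nonneg fun j _ => mul_nonneg (hγpos j) ENNReal.toReal_nonneg
      have hSbd : ∀ z, S z ≤ ∑ j, γ (k + 1) j := by
        intro z
        apply Finset.sum_le_sum
        intro j _
        have h1 : (T k) z (P j) ≤ 1 := prob_le_one
        have h2 : ((T k) z (P j)).toReal ≤ 1 := by
          calc ((T k) z (P j)).toReal ≤ (1 : ENNReal).toReal :=
                ENNReal.toReal_mono (by norm_num) h1
            _ = 1 := by simp
        calc γ (k + 1) j * ((T k) z (P j)).toReal ≤ γ (k + 1) j * 1 :=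
              mul_le_mul_of_nonneg_left h2 (hγpos j)
          _ = γ (k + 1) j := mul_one _
      set f : X → ℝ := fun z => Xu.indicator (fun _ => (1 : ℝ)) z +
          Xs.indicator (fun _ => (1 : ℝ)) z * S z with hf
      have hfbd : ∀ z, f z ≤ 1 + ∑ j, γ (k + 1) j := by
        intro z
        have : Xs.indicator (fun _ => (1 : ℝ)) z * S z ≤ 1 * (∑ j, γ (k + 1) j) :=
          mul_le_mul (hind1 _ _) (hSbd z) (hS0 z) zero_le_one
        have h2 := hind1 Xu z
        simp only [hf, one_mul] at this ⊢
        linarith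
      have hf0 : ∀ z, 0 ≤ f z := by
        intro z
        exact add_nonneg (hind0 _ _) (mul_nonneg (hind0 _ _) (hS0 z))
      have hbdd : ∀ i : Fin (np + 1), BddAbove (Set.range fun x : P i => f (x : X)) := by
        intro i
        exact ⟨1 + ∑ j, γ (k + 1) j, by rintro _ ⟨x, rfl⟩; exact hfbd _⟩
      have hγkeq : ∀ i, γ k i = ⨆ x : P i, f (x : X) := hγk k hkH
      constructor
      · intro i
        obtain ⟨x0, hx0⟩ := hPne i
        rw [hγkeq i]
        exact (hf0 x0).trans (le_ciSup (hbdd i) ⟨x0, hx0⟩)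
      · intro x
        obtain ⟨i, hi⟩ := hmem x
        -- the piecewise function as a finite sum of indicators
        have hg_eq : ∀ y, γfun (k + 1) y =
            ∑ j, (P j).indicator (fun _ => γ (k + 1) j) y := by
          intro y
          obtain ⟨iy, hiy⟩ := hmem y
          rw [hγfun (k + 1) y iy hiy, Finset.sum_eq_single iy]
          · simp [Set.indicator_apply, hiy]
          · intro j _ hj
            have hdisj : Disjoint (P j) (P iy) := hPdisj hj
            have : y ∉ P j := fun hyj => (Set.disjoint_left.mp hdisj hyj) hiy
            simp [Set.indicator_apply, this]
          · intro h; exact absurd (Finset.mem_univ iy) h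
        have hgfun_eq : γfun (k + 1) =
            fun y => ∑ j, (P j).indicator (fun _ => γ (k + 1) j) y := funext hg_eq
        have hint : Integrable (γfun (k + 1)) ((T k) x) := by
          rw [hgfun_eq]
          exact integrable_finset_sum _ fun j _ =>
            (integrable_const (γ (k + 1) j)).indicator (hPmeas j)
        have hintegral : ∫ y, γfun (k + 1) y ∂((T k) x) = S x := by
          rw [hgfun_eq]
          rw [integral_finset_sum _ fun j _ =>
            (integrable_const (γ (k + 1) j)).indicator (hPmeas j)]
          apply Finset.sum_congr rfl
          intro j _
          rw [integral_indicator_const _ (hPmeas j)]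
          simp [mul_comm, measureReal_def]
        have hVint_le : ∫ y, V (k + 1) y ∂((T k) x) ≤ S x := by
          by_cases hVint : Integrable (V (k + 1)) ((T k) x)
          · calc ∫ y, V (k + 1) y ∂((T k) x) ≤ ∫ y, γfun (k + 1) y ∂((T k) x) :=
                  integral_mono hVint hint hVle
              _ = S x := hintegral
          · rw [integral_undef hVint]; exact hS0 x
        rw [hγfun k x i hi, hVk k hkH x, hγkeq i]
        refine le_trans ?_ (le_ciSup (hbdd i) ⟨x, hi⟩)
        simp only [hf]
        exact add_le_add le_rfl (mul_le_mul_of_nonneg_left hVint_le (hind0 _ _))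
  constructor
  · intro k hk x
    exact (key (H - k) k (by omega)).2 x
  · intro x0
    have := (key H 0 (by omega)).2 x0
    linarith
end

section
/- Greedy structure of the interval-simplex LP: let m ∈ ℕ, l, u ∈ [0,1]^m with l_j ≤ u_j for all j, Σ_j l_j ≤ 1 ≤ Σ_j u_j, and let c ∈ ℝ^m. Then the maximum of Σ_j c_j t_j over the nonempty compact convex set {t ∈ ℝ^m : l_j ≤ t_j ≤ u_j for all j, Σ_j t_j = 1} is attained at a point t* with the following structure: there exists a permutation σ of {1, …, m} sorting c in non-increasing order (c_{σ(1)} ≥ c_{σ(2)} ≥ … ≥ c_{σ(m)}) and an index k such that t*_{σ(i)} = u_{σ(i)} for all i < k, t*_{σ(i)} = l_{σ(i)} for all i > k, and t*_{σ(k)} = 1 − Σ_{i < k} u_{σ(i)} − Σ_{i > k} l_{σ(i)}. -/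
/-- **Greedy structure of the interval-simplex LP:** given `l, u ∈ [0,1]^m`
with `l_j ≤ u_j`, `Σ_j l_j ≤ 1 ≤ Σ_j u_j`, and `c ∈ ℝ^m`, the maximum of
`Σ_j c_j t_j` over `{t : l ≤ t ≤ u, Σ_j t_j = 1}` is attained at a point `t*`
of the following form: there is a permutation `σ` sorting `c` in non-increasing
order and an index `k` such that `t*_{σ(i)} = u_{σ(i)}` for `i < k`,
`t*_{σ(i)} = l_{σ(i)}` for `i > k`, and
`t*_{σ(k)} = 1 - Σ_{i<k} u_{σ(i)} - Σ_{i>k} l_{σ(i)}`. -/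
theorem interval_simplex_lp_greedy
    (m : ℕ) (l u : Fin m → ℝ)
    (hl0 : ∀ j, 0 ≤ l j) (hu1 : ∀ j, u j ≤ 1)
    (hlu : ∀ j, l j ≤ u j)
    (hlsum : ∑ j, l j ≤ 1) (husum : 1 ≤ ∑ j, u j)
    (c : Fin m → ℝ)
    -- the feasible set
    (S : Set (Fin m → ℝ))
    (hS : S = {t | (∀ j, l j ≤ t j ∧ t j ≤ u j) ∧ ∑ j, t j = 1}) :
    ∃ tstar ∈ S,
      (∀ t ∈ S, ∑ j, c j * t j ≤ ∑ j, c j * tstar j) ∧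
      ∃ σ : Equiv.Perm (Fin m),
        (∀ i i' : Fin m, i ≤ i' → c (σ i') ≤ c (σ i)) ∧
        ∃ k : Fin m,
          (∀ i : Fin m, i < k → tstar (σ i) = u (σ i)) ∧
          (∀ i : Fin m, k < i → tstar (σ i) = l (σ i)) ∧
          tstar (σ k) =
            1 - (∑ i ∈ Finset.univ.filter (fun i : Fin m => i < k), u (σ i))
              - ∑ i ∈ Finset.univ.filter (fun i : Fin m => k < i), l (σ i) := by
  classical
  obtain rfl | hm := Nat.eq_zero_or_pos m
  · simp only [Finset.univ_eq_empty, Finset.sum_empty] at husum; linarith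
  set σ : Equiv.Perm (Fin m) := Tuple.sort (fun i => -c i) with hσ
  have hsort : ∀ i i' : Fin m, i ≤ i' → c (σ i') ≤ c (σ i) := by
    intro i i' h
    have := Tuple.monotone_sort (fun i => -c i) h
    simpa [hσ] using this
  -- split of a sum at k
  have hsplit : ∀ (f : Fin m → ℝ) (k : Fin m),
      ∑ i, f i = (∑ i ∈ Finset.univ.filter (fun i => i < k), f i) + f k
        + ∑ i ∈ Finset.univ.filter (fun i => k < i), f i := by
    intro f k
    have h2 : Finset.univ.filter (fun i : Fin m => ¬ i < k)
        = insert k (Finset.univ.filter (fun i => k < i)) := by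
      ext i
      simp only [Finset.mem_filter, Finset.mem_univ, Finset.mem_insert, true_and, not_lt]
      constructor
      · intro h; rcases eq_or_lt_of_le h with h | h
        · exact Or.inl h.symm
        · exact Or.inr h
      · rintro (rfl | h)
        · exact le_refl _
        · exact h.le
    have h1 := Finset.sum_filter_add_sum_filter_not Finset.univ (fun i : Fin m => i < k) f
    rw [h2, Finset.sum_insert (by simp)] at h1
    linarith
  -- choose the greedy index k
  set K : Finset (Fin m) := Finset.univ.filter
    (fun k' => 1 ≤ (∑ i ∈ Finset.univ.filter (fun i => i < k'), u (σ i)) + u (σ k')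
      + ∑ i ∈ Finset.univ.filter (fun i => k' < i), l (σ i)) with hKdef
  have hmlt : m - 1 < m := by omega
  have hKne : K.Nonempty := by
    refine ⟨⟨m - 1, hmlt⟩, Finset.mem_filter.mpr ⟨Finset.mem_univ _, ?_⟩⟩
    have hempty : Finset.univ.filter (fun i : Fin m => (⟨m - 1, hmlt⟩ : Fin m) < i)
        = ∅ := by
      ext i
      simp only [Finset.mem_filter, Finset.mem_univ, true_and, Finset.notMem_empty,
        iff_false, Fin.lt_def]
      have := i.isLt
      omega
    have h1 := hsplit (fun i => u (σ i)) ⟨m - 1, hmlt⟩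
    have h2 : ∑ i, u (σ i) = ∑ i, u i := Equiv.sum_comp σ u
    rw [hempty, Finset.sum_empty] at h1
    show 1 ≤ _ + u (σ ⟨m - 1, hmlt⟩)
      + ∑ i ∈ Finset.univ.filter (fun i : Fin m => (⟨m - 1, hmlt⟩ : Fin m) < i), l (σ i)
    rw [hempty, Finset.sum_empty]
    linarith
  set k : Fin m := K.min' hKne with hkdef
  have hk1 : 1 ≤ (∑ i ∈ Finset.univ.filter (fun i => i < k), u (σ i)) + u (σ k)
      + ∑ i ∈ Finset.univ.filter (fun i => k < i), l (σ i) := by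
    exact (Finset.mem_filter.mp (K.min'_mem hKne)).2
  have hkmin : ∀ k' : Fin m, k' < k →
      (∑ i ∈ Finset.univ.filter (fun i => i < k'), u (σ i)) + u (σ k')
        + (∑ i ∈ Finset.univ.filter (fun i => k' < i), l (σ i)) < 1 := by
    intro k' hlt
    by_contra h
    push_neg at h
    have hmem : k' ∈ K := Finset.mem_filter.mpr ⟨Finset.mem_univ _, h⟩
    exact absurd (K.min'_le k' hmem) (not_le.mpr hlt)
  -- abbreviations
  set A : ℝ := ∑ i ∈ Finset.univ.filter (fun i => i < k), u (σ i) with hA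
  set B : ℝ := ∑ i ∈ Finset.univ.filter (fun i => k < i), l (σ i) with hB
  -- lower feasibility of the greedy value
  have hvge : A + l (σ k) + B ≤ 1 := by
    rcases Nat.eq_zero_or_pos k.val with hk0 | hkpos
    · have hempty : Finset.univ.filter (fun i : Fin m => i < k) = ∅ := by
        ext i
        simp only [Finset.mem_filter, Finset.mem_univ, true_and, Finset.notMem_empty,
          iff_false, Fin.lt_def]
        omega
      have h1 := hsplit (fun i => l (σ i)) k
      have h2 : ∑ i, l (σ i) = ∑ i, l i := Equiv.sum_comp σ l
      rw [hempty, Finset.sum_empty] at h1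
      have hA0 : A = 0 := by rw [hA, hempty, Finset.sum_empty]
      rw [← hB] at h1
      linarith
    · set k' : Fin m := ⟨k.val - 1, by omega⟩ with hk'
      have hk'lt : k' < k := by rw [Fin.lt_def]; simp [hk']; omega
      have hmin := hkmin k' hk'lt
      have hU : Finset.univ.filter (fun i : Fin m => i < k)
          = insert k' (Finset.univ.filter (fun i => i < k')) := by
        ext i
        simp only [Finset.mem_filter, Finset.mem_univ, true_and, Finset.mem_insert,
          Fin.lt_def, Fin.ext_iff, hk']
        omega
      have hL : Finset.univ.filter (fun i : Fin m => k' < i)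
          = insert k (Finset.univ.filter (fun i => k < i)) := by
        ext i
        simp only [Finset.mem_filter, Finset.mem_univ, true_and, Finset.mem_insert,
          Fin.lt_def, Fin.ext_iff, hk']
        omega
      have hUeq : A = u (σ k') + ∑ i ∈ Finset.univ.filter (fun i => i < k'), u (σ i) := by
        rw [hA, hU, Finset.sum_insert (by simp)]
      have hLeq : ∑ i ∈ Finset.univ.filter (fun i : Fin m => k' < i), l (σ i)
          = l (σ k) + B := by
        rw [hL, Finset.sum_insert (by simp), hB]
      rw [hLeq] at hmin
      linarith
  have hvle : 1 - A - B ≤ u (σ k) := by linarith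
  have hvgel : l (σ k) ≤ 1 - A - B := by linarith
  -- the greedy point
  set v : ℝ := 1 - A - B with hv
  set tstar : Fin m → ℝ := fun j =>
    if σ.symm j < k then u j else if k < σ.symm j then l j else v with htstar
  have ht_eval : ∀ i : Fin m, tstar (σ i) =
      if i < k then u (σ i) else if k < i then l (σ i) else v := by
    intro i
    simp only [htstar, Equiv.symm_apply_apply]
  have htu : ∀ i : Fin m, i < k → tstar (σ i) = u (σ i) := by
    intro i hi; rw [ht_eval, if_pos hi]
  have htl : ∀ i : Fin m, k < i → tstar (σ i) = l (σ i) := by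
    intro i hi; rw [ht_eval, if_neg (not_lt_of_gt hi), if_pos hi]
  have htk : tstar (σ k) = v := by
    rw [ht_eval, if_neg (lt_irrefl k), if_neg (lt_irrefl k)]
  -- feasibility: bounds
  have hbound : ∀ j, l j ≤ tstar j ∧ tstar j ≤ u j := by
    intro j
    by_cases h1 : σ.symm j < k
    · rw [htstar]; simp only [if_pos h1]; exact ⟨hlu j, le_refl _⟩
    · by_cases h2 : k < σ.symm j
      · rw [htstar]; simp only [if_neg h1, if_pos h2]; exact ⟨le_refl _, hlu j⟩
      · have hjk : σ.symm j = k := le_antisymm (not_lt.mp h2) (not_lt.mp h1)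
        have hj : j = σ k := by rw [← hjk, Equiv.apply_symm_apply]
        rw [htstar]; simp only [if_neg h1, if_neg h2]
        rw [hj, hv]; exact ⟨hvgel, hvle⟩
  -- feasibility: sum equals 1
  have hsum1 : ∑ j, tstar j = 1 := by
    have h1 : ∑ i, tstar (σ i) = ∑ j, tstar j := Equiv.sum_comp σ tstar
    have h2 := hsplit (fun i => tstar (σ i)) k
    have h3 : ∑ i ∈ Finset.univ.filter (fun i : Fin m => i < k), tstar (σ i)
        = ∑ i ∈ Finset.univ.filter (fun i : Fin m => i < k), u (σ i) := by
      refine Finset.sum_congr rfl fun i hi => ?_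
      exact htu i (by simpa using hi)
    have h4 : ∑ i ∈ Finset.univ.filter (fun i : Fin m => k < i), tstar (σ i)
        = ∑ i ∈ Finset.univ.filter (fun i : Fin m => k < i), l (σ i) := by
      refine Finset.sum_congr rfl fun i hi => ?_
      exact htl i (by simpa using hi)
    rw [h3, h4, htk, ← hA, ← hB] at h2
    rw [← h1, h2, hv]
    ring
  refine ⟨tstar, ?_, ?_, σ, hsort, k, htu, htl, ?_⟩
  · rw [hS]; exact ⟨hbound, hsum1⟩
  · -- optimality
    intro t htS
    rw [hS] at htS
    obtain ⟨ht1, ht2⟩ := htS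
    have hts : ∑ i, t (σ i) = 1 := by
      rw [Equiv.sum_comp σ t]; exact ht2
    have hkey : ∀ i : Fin m,
        c (σ k) * (tstar (σ i) - t (σ i)) ≤ c (σ i) * (tstar (σ i) - t (σ i)) := by
      intro i
      rcases lt_trichotomy i k with h | h | h
      · have hd : 0 ≤ tstar (σ i) - t (σ i) := by
          rw [htu i h]; linarith [(ht1 (σ i)).2]
        exact mul_le_mul_of_nonneg_right (hsort i k h.le) hd
      · rw [h]
      · have hd : tstar (σ i) - t (σ i) ≤ 0 := by
          rw [htl i h]; linarith [(ht1 (σ i)).1]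
        exact mul_le_mul_of_nonpos_right (hsort k i h.le) hd
    have hsum2 := Finset.sum_le_sum (fun i (_ : i ∈ Finset.univ) => hkey i)
    have hlhs : ∑ i, c (σ k) * (tstar (σ i) - t (σ i)) = 0 := by
      rw [← Finset.mul_sum, Finset.sum_sub_distrib]
      rw [Equiv.sum_comp σ tstar, hsum1, hts]
      ring
    have hrhs : ∑ i, c (σ i) * (tstar (σ i) - t (σ i))
        = (∑ j, c j * tstar j) - ∑ j, c j * t j := by
      simp only [mul_sub]
      rw [Finset.sum_sub_distrib]
      rw [Equiv.sum_comp σ (fun j => c j * tstar j),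
          Equiv.sum_comp σ (fun j => c j * t j)]
    rw [hlhs, hrhs] at hsum2
    linarith
  · rw [htk, hv, hA, hB]
end

section
/- Soundness of IMDP control value iteration: for every x ∈ X and every k ∈ {0, …, H}, it holds that V*_k(x) ≤ γ̄*_k(x), where γ̄*_k(x) := γ̄*_{k,i} for x ∈ X_i. In particular γ̄*_0(x) ≥ V*_0(x), so 1 − γ̄*_0(x) is a lower bound on the optimal probabilistic safety 1 − V*_0(x). -/
open MeasureTheory ProbabilityTheory

/-- **Soundness of IMDP control value iteration:** for every `x ∈ X` and every
`k ∈ {0,…,H}`, the optimal unsafety value satisfies `V*_k(x) ≤ γ̄*_k(x)`, where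
`γ̄*_k(x) = γ̄*_{k,i}` for `x ∈ X_i`. In particular `γ̄*_0(x) ≥ V*_0(x)`, so
`1 - γ̄*_0(x)` is a lower bound on the optimal probabilistic safety
`1 - V*_0(x)`. -/
theorem imdp_control_value_iteration_sound
    {X U : Type*} [MeasurableSpace X] [StandardBorelSpace X]
    [MeasurableSpace U] [Nonempty U]
    -- the partition `X_1, …, X_{n_p}, X_{n_p+1}` of `X`
    (np : ℕ) (P : Fin (np + 1) → Set X)
    (hPmeas : ∀ i, MeasurableSet (P i))
    (hPne : ∀ i, (P i).Nonempty)
    (hPdisj : Pairwise (Function.onFun Disjoint P))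
    (hPcover : ⋃ i, P i = Set.univ)
    -- unsafe region `X_u = X_{n_p+1}` and safe set `X_s`
    (Xu Xs : Set X)
    (hXu : Xu = P (Fin.last np))
    (hXs : Xs = Set.univ \ Xu)
    -- horizon and controlled Markov kernel
    (H : ℕ)
    (T : Kernel (X × U) X)
    (hT : IsMarkovKernel T)
    -- optimal unsafety value functions `V*_k`
    (Vstar : ℕ → X → ℝ)
    (hVH : ∀ x, Vstar H x = Xu.indicator (fun _ => (1 : ℝ)) x)
    (hVk : ∀ k < H, ∀ x,
      Vstar k x = Xu.indicator (fun _ => (1 : ℝ)) x +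
        Xs.indicator (fun _ => (1 : ℝ)) x *
          ⨅ a : U, ∫ y, Vstar (k + 1) y ∂(T (x, a)))
    -- the feasible sets `T^i_a`
    (Tset : Fin (np + 1) → U → Set (Fin (np + 1) → ℝ))
    (hTset : ∀ i : Fin (np + 1), i ≠ Fin.last np → ∀ a : U,
      Tset i a = {t | (∀ j, t j ∈ Set.Icc (0 : ℝ) 1) ∧
        (∀ j, (⨅ x : P i, ((T ((x : X), a)) (P j)).toReal) ≤ t j ∧
          t j ≤ ⨆ x : P i, ((T ((x : X), a)) (P j)).toReal) ∧
        ∑ j, t j = 1})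
    (hTsetLast : ∀ a : U,
      Tset (Fin.last np) a =
        {t | (∀ j, j ≠ Fin.last np → t j = 0) ∧ t (Fin.last np) = 1})
    -- the IMDP control values `γ̄*_{k,i}`
    (γ : ℕ → Fin (np + 1) → ℝ)
    (hγH : ∀ i, γ H i = ⨆ x : P i, Xu.indicator (fun _ => (1 : ℝ)) (x : X))
    (hγk : ∀ k < H, ∀ i, γ k i =
      ⨅ a : U, ⨆ t : Tset i a, ∑ j, γ (k + 1) j * (t : Fin (np + 1) → ℝ) j)
    -- the piecewise-constant function `γ̄*_k(x) = γ̄*_{k,i}` for `x ∈ X_i`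
    (γfun : ℕ → X → ℝ)
    (hγfun : ∀ k, ∀ x, ∀ i : Fin (np + 1), x ∈ P i → γfun k x = γ k i) :
    (∀ x : X, ∀ k ≤ H, Vstar k x ≤ γfun k x) ∧
      ∀ x : X, 1 - γfun 0 x ≤ 1 - Vstar 0 x := by

  haveI := hT
  -- every point lies in some cell
  have hmem : ∀ x : X, ∃ i, x ∈ P i := fun x => by
    have hx : x ∈ ⋃ i, P i := by rw [hPcover]; exact Set.mem_univ x
    exact Set.mem_iUnion.mp hx
  -- a point in a non-last cell is not in Xu
  have hnotXu : ∀ (x : X) (i : Fin (np + 1)), x ∈ P i → i ≠ Fin.last np → x ∉ Xu := by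
    intro x i hx hi hxu
    rw [hXu] at hxu
    exact Set.disjoint_left.mp (hPdisj hi) hx hxu
  -- Vstar equals 1 on Xu for all k ≤ H
  have hVone : ∀ k ≤ H, ∀ y ∈ Xu, Vstar k y = 1 := by
    intro k hk y hy
    have hyns : y ∉ Xs := by rw [hXs]; simp [hy]
    rcases eq_or_lt_of_le hk with rfl | hk'
    · rw [hVH y, Set.indicator_of_mem hy]
    · rw [hVk k hk' y, Set.indicator_of_mem hy, Set.indicator_of_notMem hyns,
        zero_mul, add_zero]
  -- integral bounds helper
  have intAux : ∀ (μ : Measure X), IsProbabilityMeasure μ → ∀ f : X → ℝ,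
      (∀ y, 0 ≤ f y) → (∀ y, f y ≤ 1) → 0 ≤ ∫ y, f y ∂μ ∧ ∫ y, f y ∂μ ≤ 1 := by
    intro μ hμ f h0 h1
    refine ⟨integral_nonneg h0, ?_⟩
    by_cases hi : Integrable f μ
    · calc ∫ y, f y ∂μ ≤ ∫ _y, (1:ℝ) ∂μ := integral_mono hi (integrable_const 1) h1
        _ = 1 := by simp
    · rw [integral_undef hi]; norm_num
  -- Vstar is bounded in [0,1]
  have hVbound : ∀ m k, k ≤ H → H - k = m → ∀ y, 0 ≤ Vstar k y ∧ Vstar k y ≤ 1 := by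
    intro m
    induction m with
    | zero =>
      intro k hk hm y
      have hkH : k = H := by omega
      subst hkH
      rw [hVH y]
      by_cases hy : y ∈ Xu
      · rw [Set.indicator_of_mem hy]; norm_num
      · rw [Set.indicator_of_notMem hy]; norm_num
    | succ n ih =>
      intro k hk hm y
      have hkH : k < H := by omega
      have ih' := ih (k + 1) (by omega) (by omega)
      rw [hVk k hkH y]
      by_cases hy : y ∈ Xu
      · have hyns : y ∉ Xs := by rw [hXs]; simp [hy]
        rw [Set.indicator_of_mem hy, Set.indicator_of_notMem hyns]; norm_num
      · have hys : y ∈ Xs := by rw [hXs]; exact ⟨Set.mem_univ y, hy⟩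
        rw [Set.indicator_of_notMem hy, Set.indicator_of_mem hys]
        have hIa : ∀ a : U, 0 ≤ ∫ z, Vstar (k+1) z ∂(T (y, a)) ∧
            ∫ z, Vstar (k+1) z ∂(T (y, a)) ≤ 1 := fun a =>
          intAux (T (y, a)) inferInstance _ (fun z => (ih' z).1) (fun z => (ih' z).2)
        have h0 : (0:ℝ) ≤ ⨅ a : U, ∫ z, Vstar (k+1) z ∂(T (y, a)) :=
          le_ciInf fun a => (hIa a).1
        have h1 : (⨅ a : U, ∫ z, Vstar (k+1) z ∂(T (y, a))) ≤ 1 := by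
          refine le_trans (ciInf_le ⟨0, ?_⟩ (Classical.arbitrary U)) (hIa _).2
          rintro _ ⟨a, rfl⟩; exact (hIa a).1
        constructor <;> nlinarith
  -- main downward induction: nonnegativity of γ and soundness
  have main : ∀ m k, k ≤ H → H - k = m →
      (∀ i, 0 ≤ γ k i) ∧ (∀ x i, x ∈ P i → Vstar k x ≤ γ k i) := by
    intro m
    induction m with
    | zero =>
      intro k hk hm
      have hkH : k = H := by omega
      subst hkH
      have hbdd : ∀ i : Fin (np + 1),
          BddAbove (Set.range fun x : P i => Xu.indicator (fun _ => (1:ℝ)) (x : X)) := by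
        intro i
        refine ⟨1, ?_⟩
        rintro _ ⟨x, rfl⟩
        dsimp only
        by_cases hx : (x : X) ∈ Xu
        · rw [Set.indicator_of_mem hx]
        · rw [Set.indicator_of_notMem hx]; norm_num
      constructor
      · intro i
        obtain ⟨x0, hx0⟩ := hPne i
        rw [hγH i]
        refine le_trans ?_ (le_ciSup (hbdd i) ⟨x0, hx0⟩)
        dsimp only
        by_cases hx : x0 ∈ Xu
        · rw [Set.indicator_of_mem hx]; norm_num
        · rw [Set.indicator_of_notMem hx]
      · intro x i hx
        rw [hVH x, hγH i]
        exact le_ciSup (hbdd i) ⟨x, hx⟩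
    | succ n ih =>
      intro k hk hm
      have hkH : k < H := by omega
      obtain ⟨hγ1, hV1⟩ := ih (k + 1) (by omega) (by omega)
      have hVb1 := hVbound (H - (k+1)) (k+1) (by omega) rfl
      -- 1 ≤ γ (k+1) last
      have hγlast : (1:ℝ) ≤ γ (k + 1) (Fin.last np) := by
        obtain ⟨x0, hx0⟩ := hPne (Fin.last np)
        have hx0u : x0 ∈ Xu := by rw [hXu]; exact hx0
        have := hV1 x0 (Fin.last np) hx0
        rwa [hVone (k+1) (by omega) x0 hx0u] at this
      -- value of γ k at the last index
      have hγklast : γ k (Fin.last np) = γ (k + 1) (Fin.last np) := by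
        rw [hγk k hkH]
        have hsum : ∀ a : U,
            (⨆ t : Tset (Fin.last np) a, ∑ j, γ (k + 1) j * (t : Fin (np+1) → ℝ) j)
              = γ (k + 1) (Fin.last np) := by
          intro a
          have hval0 : ∀ t : Fin (np+1) → ℝ, t ∈ Tset (Fin.last np) a →
              (∑ j, γ (k + 1) j * t j) = γ (k + 1) (Fin.last np) := by
            intro t ht
            rw [hTsetLast a] at ht
            obtain ⟨h0, h1⟩ := ht
            rw [Finset.sum_eq_single (Fin.last np)]
            · rw [h1, mul_one]
            · intro j _ hj; rw [h0 j hj, mul_zero]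
            · intro hmem'; exact absurd (Finset.mem_univ _) hmem'
          have hval : ∀ t : Tset (Fin.last np) a,
              (∑ j, γ (k + 1) j * (t : Fin (np+1) → ℝ) j) = γ (k + 1) (Fin.last np) :=
            fun t => hval0 t t.2
          haveI : Nonempty (Tset (Fin.last np) a) := by
            refine ⟨⟨fun j => if j = Fin.last np then 1 else 0, ?_⟩⟩
            rw [hTsetLast a]
            exact ⟨fun j hj => if_neg hj, if_pos rfl⟩
          rw [iSup_congr hval, ciSup_const]
        simp only [hsum]
        exact ciInf_const
      -- the hard case: i ≠ last
      have hard : ∀ i : Fin (np + 1), i ≠ Fin.last np →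
          (0 ≤ γ k i) ∧ (∀ x, x ∈ P i → Vstar k x ≤ γ k i) := by
        intro i hi
        haveI : Nonempty (P i) := (hPne i).to_subtype
        -- the candidate feasible vector from a point of P i
        have htstar : ∀ (x' : X), x' ∈ P i → ∀ a : U,
            (fun j => ((T (x', a)) (P j)).toReal) ∈ Tset i a := by
          intro x' hx' a
          rw [hTset i hi a]
          simp only [Set.mem_setOf_eq]
          have hle1 : ∀ (z : X) (j : Fin (np+1)), ((T (z, a)) (P j)).toReal ≤ 1 := by
            intro z j
            have h := prob_le_one (μ := T (z, a)) (s := P j)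
            have := ENNReal.toReal_mono ENNReal.one_ne_top h
            simpa using this
          refine ⟨fun j => Set.mem_Icc.mpr ⟨ENNReal.toReal_nonneg, hle1 x' j⟩, ?_, ?_⟩
          · intro j
            have hbb : BddBelow (Set.range fun z : P i => ((T ((z : X), a)) (P j)).toReal) :=
              ⟨0, by rintro _ ⟨z, rfl⟩; exact ENNReal.toReal_nonneg⟩
            have hba : BddAbove (Set.range fun z : P i => ((T ((z : X), a)) (P j)).toReal) :=
              ⟨1, by rintro _ ⟨z, rfl⟩; exact hle1 (z : X) j⟩
            exact ⟨ciInf_le hbb ⟨x', hx'⟩, le_ciSup hba ⟨x', hx'⟩⟩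
          · have hμsum : ∑ j, (T (x', a)) (P j) = 1 := by
              have := measure_iUnion (μ := T (x', a)) hPdisj hPmeas
              rw [hPcover] at this
              rw [← tsum_fintype (L := SummationFilter.unconditional _), ← this, measure_univ]
            rw [← ENNReal.toReal_sum (fun j _ => measure_ne_top _ _), hμsum,
              ENNReal.toReal_one]
        -- bounded above: sums over feasible vectors
        have hbddS : ∀ a : U, BddAbove (Set.range fun t : Tset i a =>
            ∑ j, γ (k + 1) j * (t : Fin (np+1) → ℝ) j) := by
          intro a
          refine ⟨∑ j, |γ (k + 1) j|, ?_⟩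
          rintro _ ⟨⟨t, ht⟩, rfl⟩
          rw [hTset i hi a] at ht
          refine Finset.sum_le_sum fun j _ => ?_
          have h0 := (ht.1 j).1
          have h1 := (ht.1 j).2
          calc γ (k + 1) j * t j ≤ |γ (k + 1) j| * t j :=
                mul_le_mul_of_nonneg_right (le_abs_self _) h0
            _ ≤ |γ (k + 1) j| * 1 := mul_le_mul_of_nonneg_left h1 (abs_nonneg _)
            _ = |γ (k + 1) j| := mul_one _
        -- sums over feasible vectors are nonnegative
        have hSnn : ∀ (a : U) (t : Tset i a),
            0 ≤ ∑ j, γ (k + 1) j * (t : Fin (np+1) → ℝ) j := by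
          rintro a ⟨t, ht⟩
          rw [hTset i hi a] at ht
          exact Finset.sum_nonneg fun j _ => mul_nonneg (hγ1 j) (ht.1 j).1
        obtain ⟨x0, hx0⟩ := hPne i
        have hG0 : ∀ a : U, (0:ℝ) ≤
            ⨆ t : Tset i a, ∑ j, γ (k + 1) j * (t : Fin (np+1) → ℝ) j := by
          intro a
          have hm' := htstar x0 hx0 a
          exact le_trans (hSnn a ⟨_, hm'⟩) (le_ciSup (hbddS a) ⟨_, hm'⟩)
        constructor
        · rw [hγk k hkH i]
          exact le_ciInf hG0
        · intro x hx
          have hxu : x ∉ Xu := hnotXu x i hx hi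
          have hxs : x ∈ Xs := by rw [hXs]; exact ⟨Set.mem_univ x, hxu⟩
          rw [hVk k hkH x, hγk k hkH i, Set.indicator_of_notMem hxu,
            Set.indicator_of_mem hxs, zero_add, one_mul]
          -- compare infima over actions
          have hIbdd : BddBelow (Set.range fun a : U => ∫ y, Vstar (k+1) y ∂(T (x, a))) := by
            refine ⟨0, ?_⟩
            rintro _ ⟨a, rfl⟩
            exact integral_nonneg fun y => (hVb1 y).1
          refine le_ciInf fun a => le_trans (ciInf_le hIbdd a) ?_
          -- the dominating simple function
          set g : X → ℝ := fun y => ∑ j, γ (k + 1) j * (P j).indicator (fun _ => (1:ℝ)) y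
            with hg
          have hVg : ∀ y, Vstar (k+1) y ≤ g y := by
            intro y
            obtain ⟨jy, hjy⟩ := hmem y
            have : g y = γ (k + 1) jy := by
              show (∑ j, γ (k + 1) j * (P j).indicator (fun _ => (1:ℝ)) y) = γ (k + 1) jy
              rw [Finset.sum_eq_single jy]
              · rw [Set.indicator_of_mem hjy, mul_one]
              · intro j _ hj
                have : y ∉ P j := fun hyj =>
                  Set.disjoint_left.mp (hPdisj hj) hyj hjy
                rw [Set.indicator_of_notMem this, mul_zero]
              · intro hmem'; exact absurd (Finset.mem_univ _) hmem'
            rw [this]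
            exact hV1 y jy hjy
          have hgnn : ∀ y, 0 ≤ g y := by
            intro y
            exact Finset.sum_nonneg fun j _ => mul_nonneg (hγ1 j)
              (Set.indicator_nonneg (fun _ _ => zero_le_one) y)
          have hgint : Integrable g (T (x, a)) :=
            integrable_finset_sum _ fun j _ =>
              ((integrable_const (1:ℝ)).indicator (hPmeas j)).const_mul _
          have hgI : ∫ y, g y ∂(T (x, a)) =
              ∑ j, γ (k + 1) j * ((T (x, a)) (P j)).toReal := by
            show ∫ y, ∑ j, γ (k + 1) j * (P j).indicator (fun _ => (1:ℝ)) y ∂(T (x, a)) = _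
            rw [integral_finset_sum _ fun j _ =>
              ((integrable_const (1:ℝ)).indicator (hPmeas j)).const_mul _]
            refine Finset.sum_congr rfl fun j _ => ?_
            rw [integral_const_mul, integral_indicator_const (1:ℝ) (hPmeas j)]
            simp [Measure.real]
          have hIg : ∫ y, Vstar (k+1) y ∂(T (x, a)) ≤ ∫ y, g y ∂(T (x, a)) := by
            by_cases hint : Integrable (Vstar (k+1)) (T (x, a))
            · exact integral_mono hint hgint hVg
            · rw [integral_undef hint]
              exact integral_nonneg hgnn
          refine le_trans hIg ?_
          rw [hgI]
          exact le_ciSup (hbddS a) ⟨_, htstar x hx a⟩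
      constructor
      · intro i
        by_cases hi : i = Fin.last np
        · subst hi; rw [hγklast]; exact hγ1 _
        · exact (hard i hi).1
      · intro x i hx
        by_cases hi : i = Fin.last np
        · subst hi
          have hxu : x ∈ Xu := by rw [hXu]; exact hx
          rw [hVone k (by omega) x hxu, hγklast]
          exact hγlast
        · exact (hard i hi).2 x hx
  have first : ∀ x : X, ∀ k ≤ H, Vstar k x ≤ γfun k x := by
    intro x k hk
    obtain ⟨i, hx⟩ := hmem x
    rw [hγfun k x i hx]
    exact (main (H - k) k hk rfl).2 x i hx
  exact ⟨first, fun x => by have := first x 0 (Nat.zero_le H); linarith⟩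
end

section
/- Soundness of the IMC-relaxed fixed-policy recursion: define γ̄_{H,i} = sup_{x ∈ X_i} 1_{X_u}(x) and γ̄_{k,i} = sup_{t ∈ F^i_k} Σ_{j=1}^{n_p+1} γ̄_{k+1,j} t_j for i ≤ n_p, where F^i_k = { t ∈ [0,1]^{n_p+1} : inf_{x ∈ X_i} T_k(X_j | x) ≤ t_j ≤ sup_{x ∈ X_i} T_k(X_j | x) for all j, Σ_j t_j = 1 }, and γ̄_{k,n_p+1} = 1 for all k < H; set γ̄_k(x) := γ̄_{k,i} for x ∈ X_i. Then V_k(x) ≤ γ̄_k(x) for every k ∈ {0, …, H} and x ∈ X, so 1 − γ̄_0(x_0) is a lower bound on the probabilistic safety 1 − V_0(x_0). -/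
open MeasureTheory ProbabilityTheory

/-! Backward induction on `k`. Each `V_k` is measurable and `[0, 1]`-valued. On a safe cell `X_i`,
`V_k(x) = ∫ V_{k+1} dT_k(· | x)`, and bounding `V_{k+1}` by the cellwise constant `γ̄_{k+1}` bounds
this by `Σ_j γ̄_{k+1,j} T_k(X_j | x)`. The vector `(T_k(X_j | x))_j` is a probability vector whose
entries lie between the infimum and supremum over the cell, i.e. a point of `F^i_k`, so the sum is
at most `γ̄_{k,i}`. -/

open Set Function

section Partition

variable {X ι : Type*} [MeasurableSpace X] [Fintype ι] {P : ι → Set X}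

theorem integral_le_sum_mul_measureReal_of_le_on_partition {μ : Measure X} [IsFiniteMeasure μ]
    (hPmeas : ∀ j, MeasurableSet (P j)) (hPdisj : Pairwise (Disjoint on P))
    (hPcover : ⋃ j, P j = univ) {f : X → ℝ} (hf : Integrable f μ) {c : ι → ℝ}
    (hfc : ∀ j, ∀ y ∈ P j, f y ≤ c j) :
    ∫ y, f y ∂μ ≤ ∑ j, c j * μ.real (P j) := by
  rw [← setIntegral_univ, ← hPcover, integral_iUnion_fintype hPmeas hPdisj fun j => hf.integrableOn]
  gcongr with j
  calc ∫ y in P j, f y ∂μ ≤ ∫ _ in P j, c j ∂μ :=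
        setIntegral_mono_on hf.integrableOn integrableOn_const (hPmeas j) (hfc j)
    _ = c j * μ.real (P j) := by rw [setIntegral_const, smul_eq_mul, mul_comm]

theorem sum_measureReal_eq_one_of_partition {μ : Measure X} [IsProbabilityMeasure μ]
    (hPmeas : ∀ j, MeasurableSet (P j)) (hPdisj : Pairwise (Disjoint on P))
    (hPcover : ⋃ j, P j = univ) :
    ∑ j, μ.real (P j) = 1 := by
  rw [← measureReal_iUnion_fintype hPdisj hPmeas, hPcover, probReal_univ]

/-- The set `F^i_k` of the paper, for `κ = T_k`. -/
def imcFeasibleSet (κ : Kernel X X) (P : ι → Set X) (i : ι) : Set (ι → ℝ) :=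
  {t | (∀ j, t j ∈ Icc (0 : ℝ) 1) ∧
    (∀ j, (⨅ x : P i, (κ (x : X) (P j)).toReal) ≤ t j ∧
      t j ≤ ⨆ x : P i, (κ (x : X) (P j)).toReal) ∧
    ∑ j, t j = 1}

theorem measureReal_mem_imcFeasibleSet (κ : Kernel X X) [IsMarkovKernel κ]
    (hPmeas : ∀ j, MeasurableSet (P j)) (hPdisj : Pairwise (Disjoint on P))
    (hPcover : ⋃ j, P j = univ) {i : ι} {x : X} (hx : x ∈ P i) :
    (fun j => (κ x).real (P j)) ∈ imcFeasibleSet κ P i := by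
  refine ⟨fun j => ⟨measureReal_nonneg, measureReal_le_one⟩, fun j => ⟨?_, ?_⟩,
    sum_measureReal_eq_one_of_partition hPmeas hPdisj hPcover⟩
  · exact ciInf_le ⟨0, by rintro _ ⟨x', rfl⟩; exact measureReal_nonneg⟩ (⟨x, hx⟩ : P i)
  · refine le_ciSup (f := fun x' : P i => (κ x' (P j)).toReal) ⟨1, ?_⟩ ⟨x, hx⟩
    rintro _ ⟨x', rfl⟩
    exact measureReal_le_one

theorem bddAbove_range_sum_mul_of_subset_Icc {S : Set (ι → ℝ)} (hS : S ⊆ Icc 0 1) (c : ι → ℝ) :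
    BddAbove (range fun t : S => ∑ j, c j * (t : ι → ℝ) j) := by
  have hcompact := (isCompact_Icc (a := (0 : ι → ℝ)) (b := 1)).image
    (f := fun t => ∑ j, c j * t j) (by fun_prop)
  refine hcompact.bddAbove.mono ?_
  rintro _ ⟨t, rfl⟩
  exact ⟨t, hS t.2, rfl⟩

theorem imcFeasibleSet_subset_Icc (κ : Kernel X X) (P : ι → Set X) (i : ι) :
    imcFeasibleSet κ P i ⊆ Icc 0 1 :=
  fun _ ht => ⟨fun j => (ht.1 j).1, fun j => (ht.1 j).2⟩

theorem integral_le_iSup_imcFeasibleSet (κ : Kernel X X) [IsMarkovKernel κ]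
    (hPmeas : ∀ j, MeasurableSet (P j)) (hPdisj : Pairwise (Disjoint on P))
    (hPcover : ⋃ j, P j = univ) {i : ι} {x : X} (hx : x ∈ P i) {f : X → ℝ}
    (hf : Integrable f (κ x)) {c : ι → ℝ} (hfc : ∀ j, ∀ y ∈ P j, f y ≤ c j) :
    ∫ y, f y ∂κ x ≤ ⨆ t : imcFeasibleSet κ P i, ∑ j, c j * (t : ι → ℝ) j :=
  (integral_le_sum_mul_measureReal_of_le_on_partition hPmeas hPdisj hPcover hf hfc).trans <|
    le_ciSup (bddAbove_range_sum_mul_of_subset_Icc (imcFeasibleSet_subset_Icc κ P i) c)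
      (⟨_, measureReal_mem_imcFeasibleSet κ hPmeas hPdisj hPcover hx⟩ : imcFeasibleSet κ P i)

end Partition

section UnsafetyStep

variable {X : Type*} [MeasurableSpace X] {κ : Kernel X X} {A : Set X} {f : X → ℝ} {x : X}

noncomputable def unsafetyStep (κ : Kernel X X) (A : Set X) (f : X → ℝ) (x : X) : ℝ :=
  A.indicator (fun _ => 1) x + Aᶜ.indicator (fun _ => 1) x * ∫ y, f y ∂κ x

theorem unsafetyStep_of_mem (hx : x ∈ A) : unsafetyStep κ A f x = 1 := by
  simp [unsafetyStep, hx]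

theorem unsafetyStep_of_notMem (hx : x ∉ A) : unsafetyStep κ A f x = ∫ y, f y ∂κ x := by
  simp [unsafetyStep, hx]

theorem measurable_unsafetyStep (hA : MeasurableSet A) (hf : Measurable f) :
    Measurable (unsafetyStep κ A f) :=
  (measurable_const.indicator hA).add ((measurable_const.indicator hA.compl).mul
    (hf.stronglyMeasurable.integral_kernel (κ := κ)).measurable)

theorem unsafetyStep_mem_Icc [IsMarkovKernel κ] (hf : ∀ y, f y ∈ Icc 0 1) :
    unsafetyStep κ A f x ∈ Icc 0 1 := by
  by_cases hx : x ∈ A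
  · simp [unsafetyStep_of_mem hx]
  · rw [unsafetyStep_of_notMem hx]
    refine ⟨integral_nonneg fun y => (hf y).1, ?_⟩
    calc ∫ y, f y ∂κ x ≤ ∫ _, 1 ∂κ x :=
          integral_mono_of_nonneg (.of_forall fun y => (hf y).1) (integrable_const 1)
            (.of_forall fun y => (hf y).2)
      _ = 1 := by simp

theorem measurable_and_mem_Icc_of_unsafetyStep {T : ℕ → Kernel X X} [∀ k, IsMarkovKernel (T k)]
    (hA : MeasurableSet A) {H : ℕ} {V : ℕ → X → ℝ} (hVH : ∀ x, V H x = A.indicator (fun _ => 1) x)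
    (hVk : ∀ k < H, ∀ x, V k x = unsafetyStep (T k) A (V (k + 1)) x) :
    ∀ k ≤ H, Measurable (V k) ∧ ∀ x, V k x ∈ Icc 0 1 := by
  intro k hk
  induction hk using Nat.decreasingInduction with
  | self =>
    rw [funext hVH]
    exact ⟨measurable_const.indicator hA, fun x => by by_cases hx : x ∈ A <;> simp [hx]⟩
  | of_succ k hk ih =>
    rw [funext (hVk k hk)]
    exact ⟨measurable_unsafetyStep hA ih.1, fun x => unsafetyStep_mem_Icc ih.2⟩

end UnsafetyStep

theorem imc_relaxed_recursion_sound_general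
    {X : Type*} [MeasurableSpace X]
    -- the partition `X_1, …, X_{n_p}, X_{n_p+1}` of `X`
    (np : ℕ) (P : Fin (np + 1) → Set X)
    (hPmeas : ∀ i, MeasurableSet (P i))
    (hPdisj : Pairwise (Function.onFun Disjoint P))
    (hPcover : ⋃ i, P i = Set.univ)
    -- unsafe region `X_u = X_{n_p+1}` and safe set `X_s`
    (Xu Xs : Set X)
    (hXu : Xu = P (Fin.last np))
    (hXs : Xs = Set.univ \ Xu)
    -- horizon and closed-loop Markov kernels under the fixed policy
    (H : ℕ)
    (T : ℕ → Kernel X X)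
    (hT : ∀ k, IsMarkovKernel (T k))
    -- unsafety value functions `V_k`
    (V : ℕ → X → ℝ)
    (hVH : ∀ x, V H x = Xu.indicator (fun _ => (1 : ℝ)) x)
    (hVk : ∀ k < H, ∀ x,
      V k x = Xu.indicator (fun _ => (1 : ℝ)) x +
        Xs.indicator (fun _ => (1 : ℝ)) x * ∫ y, V (k + 1) y ∂((T k) x))
    -- the interval feasible sets `F^i_k`
    (Fset : ℕ → Fin (np + 1) → Set (Fin (np + 1) → ℝ))
    (hFset : ∀ k < H, ∀ i : Fin (np + 1), i ≠ Fin.last np →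
      Fset k i = {t | (∀ j, t j ∈ Set.Icc (0 : ℝ) 1) ∧
        (∀ j, (⨅ x : P i, ((T k) (x : X) (P j)).toReal) ≤ t j ∧
          t j ≤ ⨆ x : P i, ((T k) (x : X) (P j)).toReal) ∧
        ∑ j, t j = 1})
    -- the IMC values `γ̄_{k,i}`
    (γ : ℕ → Fin (np + 1) → ℝ)
    (hγH : ∀ i, γ H i = ⨆ x : P i, Xu.indicator (fun _ => (1 : ℝ)) (x : X))
    (hγk : ∀ k < H, ∀ i : Fin (np + 1), i ≠ Fin.last np → γ k i =
      ⨆ t : Fset k i, ∑ j, γ (k + 1) j * (t : Fin (np + 1) → ℝ) j)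
    (hγlast : ∀ k < H, γ k (Fin.last np) = 1)
    -- the piecewise-constant function `γ̄_k(x) = γ̄_{k,i}` for `x ∈ X_i`
    (γfun : ℕ → X → ℝ)
    (hγfun : ∀ k, ∀ x, ∀ i : Fin (np + 1), x ∈ P i → γfun k x = γ k i) :
    (∀ k ≤ H, ∀ x : X, V k x ≤ γfun k x) ∧
      ∀ x0 : X, 1 - γfun 0 x0 ≤ 1 - V 0 x0 := by
  rw [← compl_eq_univ_sdiff] at hXs
  subst hXs
  replace hVk : ∀ k < H, ∀ x, V k x = unsafetyStep (T k) Xu (V (k + 1)) x := hVk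
  have hXuMeas : MeasurableSet Xu := hXu ▸ hPmeas _
  have hVreg := measurable_and_mem_Icc_of_unsafetyStep hXuMeas hVH hVk
  have hbound : ∀ k ≤ H, ∀ x, V k x ≤ γfun k x := by
    intro k hk
    induction hk using Nat.decreasingInduction with
    | self =>
      intro x
      obtain ⟨i, hxi⟩ := iUnion_eq_univ_iff.1 hPcover x
      rw [hVH, hγfun H x i hxi, hγH]
      refine le_ciSup (f := fun x' : P i => Xu.indicator (fun _ => (1 : ℝ)) x') ⟨1, ?_⟩ ⟨x, hxi⟩
      rintro _ ⟨x', rfl⟩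
      exact indicator_apply_le' (fun _ => le_rfl) (fun _ => zero_le_one)
    | of_succ k hk ih =>
      intro x
      obtain ⟨i, hxi⟩ := iUnion_eq_univ_iff.1 hPcover x
      rw [hγfun k x i hxi, hVk k hk x]
      by_cases hi : i = Fin.last np
      · subst hi
        rw [hγlast k hk, unsafetyStep_of_mem (hXu ▸ hxi)]
      have hxu : x ∉ Xu := hXu ▸ (hPdisj hi).notMem_of_mem_left hxi
      obtain ⟨hVmeas, hV01⟩ := hVreg (k + 1) hk
      rw [unsafetyStep_of_notMem hxu, hγk k hk i hi, hFset k hk i hi]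
      exact integral_le_iSup_imcFeasibleSet (T k) hPmeas hPdisj hPcover hxi
        (.of_mem_Icc 0 1 hVmeas.aemeasurable (.of_forall hV01))
        fun j y hy => (ih y).trans_eq (hγfun (k + 1) y j hy)
  exact ⟨hbound, fun x0 => by linarith [hbound 0 H.zero_le x0]⟩

/-- **Soundness of the IMC-relaxed fixed-policy recursion:** with
`γ̄_{H,i} = sup_{x ∈ X_i} 1_{X_u}(x)`,
`γ̄_{k,i} = sup_{t ∈ F^i_k} Σ_j γ̄_{k+1,j} t_j` for `i ≤ n_p`, and
`γ̄_{k,n_p+1} = 1` for `k < H`, it holds that `V_k(x) ≤ γ̄_k(x)` for every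
`k ∈ {0,…,H}` and `x ∈ X`, so `1 - γ̄_0(x₀)` is a lower bound on the
probabilistic safety `1 - V_0(x₀)`. -/
theorem imc_relaxed_recursion_sound
    {X : Type*} [MeasurableSpace X] [StandardBorelSpace X]
    -- the partition `X_1, …, X_{n_p}, X_{n_p+1}` of `X`
    (np : ℕ) (P : Fin (np + 1) → Set X)
    (hPmeas : ∀ i, MeasurableSet (P i))
    (hPne : ∀ i, (P i).Nonempty)
    (hPdisj : Pairwise (Function.onFun Disjoint P))
    (hPcover : ⋃ i, P i = Set.univ)
    -- unsafe region `X_u = X_{n_p+1}` and safe set `X_s`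
    (Xu Xs : Set X)
    (hXu : Xu = P (Fin.last np))
    (hXs : Xs = Set.univ \ Xu)
    -- horizon and closed-loop Markov kernels under the fixed policy
    (H : ℕ)
    (T : ℕ → Kernel X X)
    (hT : ∀ k, IsMarkovKernel (T k))
    -- unsafety value functions `V_k`
    (V : ℕ → X → ℝ)
    (hVH : ∀ x, V H x = Xu.indicator (fun _ => (1 : ℝ)) x)
    (hVk : ∀ k < H, ∀ x,
      V k x = Xu.indicator (fun _ => (1 : ℝ)) x +
        Xs.indicator (fun _ => (1 : ℝ)) x * ∫ y, V (k + 1) y ∂((T k) x))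
    -- the interval feasible sets `F^i_k`
    (Fset : ℕ → Fin (np + 1) → Set (Fin (np + 1) → ℝ))
    (hFset : ∀ k < H, ∀ i : Fin (np + 1), i ≠ Fin.last np →
      Fset k i = {t | (∀ j, t j ∈ Set.Icc (0 : ℝ) 1) ∧
        (∀ j, (⨅ x : P i, ((T k) (x : X) (P j)).toReal) ≤ t j ∧
          t j ≤ ⨆ x : P i, ((T k) (x : X) (P j)).toReal) ∧
        ∑ j, t j = 1})
    -- the IMC values `γ̄_{k,i}`
    (γ : ℕ → Fin (np + 1) → ℝ)
    (hγH : ∀ i, γ H i = ⨆ x : P i, Xu.indicator (fun _ => (1 : ℝ)) (x : X))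
    (hγk : ∀ k < H, ∀ i : Fin (np + 1), i ≠ Fin.last np → γ k i =
      ⨆ t : Fset k i, ∑ j, γ (k + 1) j * (t : Fin (np + 1) → ℝ) j)
    (hγlast : ∀ k < H, γ k (Fin.last np) = 1)
    -- the piecewise-constant function `γ̄_k(x) = γ̄_{k,i}` for `x ∈ X_i`
    (γfun : ℕ → X → ℝ)
    (hγfun : ∀ k, ∀ x, ∀ i : Fin (np + 1), x ∈ P i → γfun k x = γ k i) :
    (∀ k ≤ H, ∀ x : X, V k x ≤ γfun k x) ∧
      ∀ x0 : X, 1 - γfun 0 x0 ≤ 1 - V 0 x0 :=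
  imc_relaxed_recursion_sound_general np P hPmeas hPdisj hPcover Xu Xs hXu hXs H T hT V hVH hVk Fset
    hFset γ hγH hγk hγlast γfun hγfun
end

section
/- LP lower-bound recursion for the fixed-policy unsafety value: define γ^L_{H,i} = inf_{x ∈ X_i} 1_{X_u}(x) and γ^L_{k,i} = inf_{t ∈ F^i_k} Σ_{j=1}^{n_p+1} γ^L_{k+1,j} t_j for i ≤ n_p, where F^i_k = { t ∈ [0,1]^{n_p+1} : inf_{x ∈ X_i} T_k(X_j | x) ≤ t_j ≤ sup_{x ∈ X_i} T_k(X_j | x) for all j, Σ_j t_j = 1 }, and γ^L_{k,n_p+1} = 1 for all k < H; set γ^L_k(x) := γ^L_{k,i} for x ∈ X_i. Then γ^L_k(x) ≤ V_k(x) for every k ∈ {0, …, H} and x ∈ X, so 1 − γ^L_0(x_0) is an upper bound on the probabilistic safety 1 − V_0(x_0). -/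
open MeasureTheory ProbabilityTheory

/-- **LP lower-bound recursion for the fixed-policy unsafety value:** with
`γ^L_{H,i} = inf_{x ∈ X_i} 1_{X_u}(x)`,
`γ^L_{k,i} = inf_{t ∈ F^i_k} Σ_j γ^L_{k+1,j} t_j` for `i ≤ n_p`, and
`γ^L_{k,n_p+1} = 1` for `k < H`, it holds that `γ^L_k(x) ≤ V_k(x)` for every
`k ∈ {0,…,H}` and `x ∈ X`, so `1 - γ^L_0(x₀)` is an upper bound on the
probabilistic safety `1 - V_0(x₀)`. -/
theorem imc_lp_lower_bound_recursion
    {X : Type*} [MeasurableSpace X] [StandardBorelSpace X]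
    -- the partition `X_1, …, X_{n_p}, X_{n_p+1}` of `X`
    (np : ℕ) (P : Fin (np + 1) → Set X)
    (hPmeas : ∀ i, MeasurableSet (P i))
    (hPne : ∀ i, (P i).Nonempty)
    (hPdisj : Pairwise (Function.onFun Disjoint P))
    (hPcover : ⋃ i, P i = Set.univ)
    -- unsafe region `X_u = X_{n_p+1}` and safe set `X_s`
    (Xu Xs : Set X)
    (hXu : Xu = P (Fin.last np))
    (hXs : Xs = Set.univ \ Xu)
    -- horizon and closed-loop Markov kernels under the fixed policy
    (H : ℕ)
    (T : ℕ → Kernel X X)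
    (hT : ∀ k, IsMarkovKernel (T k))
    -- unsafety value functions `V_k`
    (V : ℕ → X → ℝ)
    (hVH : ∀ x, V H x = Xu.indicator (fun _ => (1 : ℝ)) x)
    (hVk : ∀ k < H, ∀ x,
      V k x = Xu.indicator (fun _ => (1 : ℝ)) x +
        Xs.indicator (fun _ => (1 : ℝ)) x * ∫ y, V (k + 1) y ∂((T k) x))
    -- the interval feasible sets `F^i_k`
    (Fset : ℕ → Fin (np + 1) → Set (Fin (np + 1) → ℝ))
    (hFset : ∀ k < H, ∀ i : Fin (np + 1), i ≠ Fin.last np →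
      Fset k i = {t | (∀ j, t j ∈ Set.Icc (0 : ℝ) 1) ∧
        (∀ j, (⨅ x : P i, ((T k) (x : X) (P j)).toReal) ≤ t j ∧
          t j ≤ ⨆ x : P i, ((T k) (x : X) (P j)).toReal) ∧
        ∑ j, t j = 1})
    -- the IMC values `γ̄_{k,i}`
    (γ : ℕ → Fin (np + 1) → ℝ)
    (hγH : ∀ i, γ H i = ⨅ x : P i, Xu.indicator (fun _ => (1 : ℝ)) (x : X))
    (hγk : ∀ k < H, ∀ i : Fin (np + 1), i ≠ Fin.last np → γ k i =
      ⨅ t : Fset k i, ∑ j, γ (k + 1) j * (t : Fin (np + 1) → ℝ) j)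
    (hγlast : ∀ k < H, γ k (Fin.last np) = 1)
    -- the piecewise-constant function `γ̄_k(x) = γ̄_{k,i}` for `x ∈ X_i`
    (γfun : ℕ → X → ℝ)
    (hγfun : ∀ k, ∀ x, ∀ i : Fin (np + 1), x ∈ P i → γfun k x = γ k i) :
    (∀ k ≤ H, ∀ x : X, γfun k x ≤ V k x) ∧
      ∀ x0 : X, 1 - V 0 x0 ≤ 1 - γfun 0 x0 := by
  have hcover : ∀ x : X, ∃ i, x ∈ P i := by
    intro x
    have : x ∈ ⋃ i, P i := hPcover ▸ Set.mem_univ x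
    exact Set.mem_iUnion.mp this
  have hXuMeas : MeasurableSet Xu := hXu ▸ hPmeas (Fin.last np)
  have hXsMeas : MeasurableSet Xs := hXs ▸ (MeasurableSet.univ.diff hXuMeas)
  -- measure of partition pieces sums to 1
  have hsum_meas : ∀ (μ : Measure X) [IsProbabilityMeasure μ],
      ∑ j, (μ (P j)).toReal = 1 := by
    intro μ _
    rw [← ENNReal.toReal_sum (fun j _ => measure_ne_top μ (P j))]
    have h1 : (∑ j, μ (P j)) = μ Set.univ := by
      rw [← hPcover, measure_iUnion hPdisj hPmeas, tsum_fintype]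
    rw [h1, measure_univ, ENNReal.toReal_one]
  -- V is measurable and in [0,1]
  have hV : ∀ d k, k + d = H → Measurable (V k) ∧ ∀ x, 0 ≤ V k x ∧ V k x ≤ 1 := by
    intro d
    induction d with
    | zero =>
      intro k hk
      have hkH : k = H := by omega
      subst hkH
      have heq : V k = fun x => Xu.indicator (fun _ => (1 : ℝ)) x := funext hVH
      rw [heq]
      refine ⟨measurable_const.indicator hXuMeas, fun x => ?_⟩
      by_cases hx : x ∈ Xu <;> simp [Set.indicator_apply, hx]
    | succ d ih =>
      intro k hk
      have hkH : k < H := by omega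
      have ih' := ih (k + 1) (by omega)
      haveI := hT k
      have hIntMeas : Measurable (fun x => ∫ y, V (k + 1) y ∂((T k) x)) := by
        have : StronglyMeasurable (fun x => ∫ y, (fun p : X × X => V (k + 1) p.2) (x, y) ∂((T k) x)) :=
          StronglyMeasurable.integral_kernel_prod_right'
            ((ih'.1.comp measurable_snd).stronglyMeasurable)
        exact this.measurable
      have hInteg : ∀ x : X, Integrable (V (k + 1)) ((T k) x) := by
        intro x
        refine Integrable.mono' (integrable_const (1 : ℝ)) ih'.1.aestronglyMeasurable ?_
        filter_upwards with y
        rw [Real.norm_eq_abs, abs_le]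
        exact ⟨by linarith [(ih'.2 y).1], (ih'.2 y).2⟩
      have heq : V k = fun x => Xu.indicator (fun _ => (1 : ℝ)) x +
          Xs.indicator (fun _ => (1 : ℝ)) x * ∫ y, V (k + 1) y ∂((T k) x) :=
        funext (hVk k hkH)
      constructor
      · rw [heq]
        exact (measurable_const.indicator hXuMeas).add
          ((measurable_const.indicator hXsMeas).mul hIntMeas)
      · intro x
        have hint_nonneg : 0 ≤ ∫ y, V (k + 1) y ∂((T k) x) :=
          integral_nonneg (fun y => (ih'.2 y).1)
        have hint_le_one : ∫ y, V (k + 1) y ∂((T k) x) ≤ 1 := by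
          calc ∫ y, V (k + 1) y ∂((T k) x) ≤ ∫ _, (1 : ℝ) ∂((T k) x) :=
                integral_mono (hInteg x) (integrable_const 1) (fun y => (ih'.2 y).2)
            _ = 1 := by simp
        rw [heq]
        by_cases hx : x ∈ Xu
        · have hxs : x ∉ Xs := by rw [hXs]; simp [hx]
          simp [Set.indicator_of_mem hx, Set.indicator_of_notMem hxs]
        · have hxs : x ∈ Xs := by rw [hXs]; exact ⟨trivial, hx⟩
          simp only [Set.indicator_of_notMem hx, Set.indicator_of_mem hxs, zero_add, one_mul]
          exact ⟨hint_nonneg, hint_le_one⟩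
  -- representation of γfun as a finite sum of indicator functions
  have hγrep : ∀ m, γfun m = fun x => ∑ j, (P j).indicator (fun _ => γ m j) x := by
    intro m
    funext x
    obtain ⟨i, hi⟩ := hcover x
    rw [hγfun m x i hi]
    rw [Finset.sum_eq_single i]
    · rw [Set.indicator_of_mem hi]
    · intro j _ hj
      have hxj : x ∉ P j := fun hxj => Set.disjoint_left.mp (hPdisj hj) hxj hi
      rw [Set.indicator_of_notMem hxj]
    · intro h; exact absurd (Finset.mem_univ i) h
  have hγfunInteg : ∀ m (μ : Measure X) [IsFiniteMeasure μ], Integrable (γfun m) μ := by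
    intro m μ _
    rw [hγrep m]
    exact integrable_finset_sum _ (fun j _ =>
      (integrable_const (γ m j)).indicator (hPmeas j))
  have hγfunInt : ∀ m (μ : Measure X) [IsFiniteMeasure μ],
      ∫ y, γfun m y ∂μ = ∑ j, γ m j * (μ (P j)).toReal := by
    intro m μ _
    rw [hγrep m]
    rw [integral_finset_sum _ (fun j _ =>
      (integrable_const (γ m j)).indicator (hPmeas j))]
    refine Finset.sum_congr rfl (fun j _ => ?_)
    rw [integral_indicator_const _ (hPmeas j), smul_eq_mul, mul_comm, measureReal_def]
  -- main backward induction
  have main : ∀ d k, k + d = H → ∀ x : X, γfun k x ≤ V k x := by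
    intro d
    induction d with
    | zero =>
      intro k hk x
      have hkH : k = H := by omega
      subst hkH
      obtain ⟨i, hi⟩ := hcover x
      rw [hγfun k x i hi, hγH i, hVH x]
      refine ciInf_le ⟨0, ?_⟩ (⟨x, hi⟩ : P i)
      rintro _ ⟨y, rfl⟩
      exact Set.indicator_nonneg (fun _ _ => zero_le_one) _
    | succ d ih =>
      intro k hk x
      have hkH : k < H := by omega
      obtain ⟨i, hi⟩ := hcover x
      rw [hγfun k x i hi]
      haveI := hT k
      by_cases hil : i = Fin.last np
      · subst hil
        rw [hγlast k hkH]
        have hxu : x ∈ Xu := hXu ▸ hi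
        have hxs : x ∉ Xs := by rw [hXs]; simp [hxu]
        rw [hVk k hkH x]
        simp [Set.indicator_of_mem hxu, Set.indicator_of_notMem hxs]
      · -- x safe
        have hxu : x ∉ Xu := by
          rw [hXu]; exact fun h => Set.disjoint_left.mp (hPdisj hil) hi h
        have hxs : x ∈ Xs := by rw [hXs]; exact ⟨trivial, hxu⟩
        have hVkx : V k x = ∫ y, V (k + 1) y ∂((T k) x) := by
          rw [hVk k hkH x]
          simp [Set.indicator_of_notMem hxu, Set.indicator_of_mem hxs]
        set μ := (T k) x with hμ
        haveI : IsProbabilityMeasure μ := (hT k).isProbabilityMeasure x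
        -- the concrete transition vector t*
        set t : Fin (np + 1) → ℝ := fun j => (μ (P j)).toReal with ht
        have htIcc : ∀ j, t j ∈ Set.Icc (0 : ℝ) 1 := by
          intro j
          refine ⟨ENNReal.toReal_nonneg, ?_⟩
          have := ENNReal.toReal_mono ENNReal.one_ne_top (prob_le_one (μ := μ) (s := P j))
          simpa using this
        have htmem : t ∈ Fset k i := by
          rw [hFset k hkH i hil]
          refine ⟨htIcc, fun j => ⟨?_, ?_⟩, hsum_meas μ⟩
          · refine ciInf_le ⟨0, ?_⟩ (⟨x, hi⟩ : P i)
            rintro _ ⟨y, rfl⟩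
            exact ENNReal.toReal_nonneg
          · have hbA : BddAbove (Set.range fun y : P i => (((T k) (y : X)) (P j)).toReal) := by
              refine ⟨1, ?_⟩
              rintro _ ⟨y, rfl⟩
              haveI : IsProbabilityMeasure ((T k) (y : X)) := (hT k).isProbabilityMeasure _
              have := ENNReal.toReal_mono ENNReal.one_ne_top
                (prob_le_one (μ := (T k) (y : X)) (s := P j))
              simpa using this
            exact le_ciSup hbA (⟨x, hi⟩ : P i)
        -- the infimum is below the value at t*
        have hbdd : BddBelow (Set.range fun s : Fset k i =>
            ∑ j, γ (k + 1) j * (s : Fin (np + 1) → ℝ) j) := by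
          refine ⟨-∑ j, |γ (k + 1) j|, ?_⟩
          rintro _ ⟨⟨s, hs⟩, rfl⟩
          rw [hFset k hkH i hil] at hs
          have : ∑ j, -|γ (k + 1) j| ≤ ∑ j, γ (k + 1) j * s j := by
            refine Finset.sum_le_sum (fun j _ => ?_)
            obtain ⟨hs0, hs1⟩ := hs.1 j
            rcases le_or_gt 0 (γ (k + 1) j) with hg | hg
            · have h1 : 0 ≤ γ (k + 1) j * s j := mul_nonneg hg hs0
              have h2 := abs_nonneg (γ (k + 1) j)
              linarith
            · have h1 : γ (k + 1) j * s j ≥ γ (k + 1) j * 1 := by nlinarith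
              have := neg_abs_le (γ (k + 1) j)
              nlinarith
          simpa using this
        have hstep1 : γ k i ≤ ∑ j, γ (k + 1) j * t j := by
          rw [hγk k hkH i hil]
          exact ciInf_le hbdd (⟨t, htmem⟩ : Fset k i)
        have hstep2 : ∑ j, γ (k + 1) j * t j = ∫ y, γfun (k + 1) y ∂μ := by
          rw [hγfunInt (k + 1) μ]
        have hstep3 : ∫ y, γfun (k + 1) y ∂μ ≤ ∫ y, V (k + 1) y ∂μ := by
          have hV' := hV d (k + 1) (by omega)
          have hIntegV : Integrable (V (k + 1)) μ := by
            refine Integrable.mono' (integrable_const (1 : ℝ)) hV'.1.aestronglyMeasurable ?_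
            filter_upwards with y
            rw [Real.norm_eq_abs, abs_le]
            exact ⟨by linarith [(hV'.2 y).1], (hV'.2 y).2⟩
          exact integral_mono (hγfunInteg (k + 1) μ) hIntegV (fun y => ih (k + 1) (by omega) y)
        rw [hVkx]
        calc γ k i ≤ ∑ j, γ (k + 1) j * t j := hstep1
          _ = ∫ y, γfun (k + 1) y ∂μ := hstep2
          _ ≤ ∫ y, V (k + 1) y ∂μ := hstep3
  refine ⟨fun k hk x => main (H - k) k (by omega) x, fun x0 => ?_⟩
  have := main H 0 (by omega) x0
  linarith
end

section
/- Sandwich bound from the two LP recursions: with γ^L_k defined via the infimum LP recursion and γ̄_k defined via the supremum LP recursion over the same interval feasible sets F^i_k, it holds for every k ∈ {0, …, H} and every x ∈ X that γ^L_k(x) ≤ V_k(x) ≤ γ̄_k(x); hence the probabilistic safety 1 − V_0(x_0) lies in the interval [1 − γ̄_0(x_0), 1 − γ^L_0(x_0)] for every initial state x_0. -/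
open MeasureTheory ProbabilityTheory Set

/-!
The lower and upper LP values bound the unsafety value function cell by cell, by backward
induction on `k`. On the unsafe cell all three quantities equal `1`. On a safe cell `X_i`,
`V_k(x)` is the integral of `V_{k+1}` against `T_k(· | x)`; since `V_{k+1}` lies between the
constants `γ^L_{k+1,j}` and `γ̄_{k+1,j}` on each cell `X_j`, this integral lies between
`Σ_j γ^L_{k+1,j} t_j` and `Σ_j γ̄_{k+1,j} t_j`, where `t_j = T_k(X_j | x)`. The vector `t` is
feasible for both LPs over `F^i_k`, so the two sums are bounded by their infimum and supremum.
-/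

theorem mem_Icc_ciInf_ciSup {ι : Sort*} {f : ι → ℝ} {C : ℝ} (hC : ∀ i, |f i| ≤ C)
    (i : ι) :
    f i ∈ Icc (⨅ i, f i) (⨆ i, f i) :=
  ⟨ciInf_le ⟨-C, forall_mem_range.2 fun i => (abs_le.1 (hC i)).1⟩ i,
    le_ciSup ⟨C, forall_mem_range.2 fun i => (abs_le.1 (hC i)).2⟩ i⟩

theorem abs_sum_mul_le_sum_abs {ι : Type*} [Fintype ι] (γ t : ι → ℝ)
    (ht : ∀ j, t j ∈ Icc (0 : ℝ) 1) : |∑ j, γ j * t j| ≤ ∑ j, |γ j| :=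
  (Finset.abs_sum_le_sum_abs _ _).trans <| Finset.sum_le_sum fun j _ => by
    rw [abs_mul, abs_of_nonneg (ht j).1]
    exact mul_le_of_le_one_right (abs_nonneg _) (ht j).2

theorem integral_mem_Icc_of_mem_Icc_on_partition {X ι : Type*} [MeasurableSpace X] [Fintype ι]
    {μ : Measure X} [IsFiniteMeasure μ] {P : ι → Set X} (hmeas : ∀ j, MeasurableSet (P j))
    (hdisj : Pairwise (Function.onFun Disjoint P)) (hcover : ⋃ j, P j = univ) {f : X → ℝ}
    (hf : AEStronglyMeasurable f μ) {lo up : ι → ℝ}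
    (hbounds : ∀ j, ∀ y ∈ P j, f y ∈ Icc (lo j) (up j)) :
    ∫ y, f y ∂μ ∈ Icc (∑ j, lo j * μ.real (P j)) (∑ j, up j * μ.real (P j)) := by
  have hint : ∀ j, IntegrableOn f (P j) μ := fun j =>
    Measure.integrableOn_of_bounded (M := max |lo j| |up j|) (measure_ne_top _ _) hf <|
      ae_restrict_of_forall_mem (hmeas j) fun y hy =>
        abs_le_max_abs_abs (hbounds j y hy).1 (hbounds j y hy).2
  have hconst (c : ℝ) (j : ι) : ∫ _ in P j, c ∂μ = c * μ.real (P j) := by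
    rw [setIntegral_const, smul_eq_mul, mul_comm]
  rw [← setIntegral_univ, ← hcover, integral_iUnion_fintype hmeas hdisj hint]
  refine ⟨Finset.sum_le_sum fun j _ => ?_, Finset.sum_le_sum fun j _ => ?_⟩
  · rw [← hconst]
    exact setIntegral_mono_on (integrableOn_const (measure_ne_top _ _)) (hint j) (hmeas j)
      fun y hy => (hbounds j y hy).1
  · rw [← hconst]
    exact setIntegral_mono_on (hint j) (integrableOn_const (measure_ne_top _ _)) (hmeas j)
      fun y hy => (hbounds j y hy).2

def intervalFeasibleSet {X Y ι : Type*} [MeasurableSpace X] [MeasurableSpace Y] [Fintype ι]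
    (κ : Kernel X Y) (A : Set X) (P : ι → Set Y) : Set (ι → ℝ) :=
  {t | (∀ j, t j ∈ Icc (0 : ℝ) 1) ∧
    (∀ j, (⨅ x : A, (κ (x : X) (P j)).toReal) ≤ t j ∧
      t j ≤ ⨆ x : A, (κ (x : X) (P j)).toReal) ∧
    ∑ j, t j = 1}

section IntervalFeasibleSet

variable {X Y ι : Type*} [MeasurableSpace X] [MeasurableSpace Y] [Fintype ι]
  {κ : Kernel X Y} [IsMarkovKernel κ] {P : ι → Set Y}

theorem transitionProb_mem_intervalFeasibleSet (hmeas : ∀ j, MeasurableSet (P j))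
    (hdisj : Pairwise (Function.onFun Disjoint P)) (hcover : ⋃ j, P j = univ)
    {A : Set X} {x : X} (hx : x ∈ A) :
    (fun j => (κ x).real (P j)) ∈ intervalFeasibleSet κ A P :=
  ⟨fun j => ⟨measureReal_nonneg, measureReal_le_one⟩,
    fun j => mem_Icc_ciInf_ciSup (f := fun z : A => (κ z).real (P j)) (C := 1)
      (fun z => by rw [abs_of_nonneg measureReal_nonneg]; exact measureReal_le_one) ⟨x, hx⟩,
    by rw [← measureReal_iUnion_fintype hdisj hmeas, hcover, probReal_univ]⟩

theorem integral_mem_Icc_iInf_iSup_intervalFeasibleSet (hmeas : ∀ j, MeasurableSet (P j))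
    (hdisj : Pairwise (Function.onFun Disjoint P)) (hcover : ⋃ j, P j = univ)
    {f : Y → ℝ} (hf : Measurable f) {lo up : ι → ℝ}
    (hbounds : ∀ j, ∀ y ∈ P j, f y ∈ Icc (lo j) (up j)) {A : Set X} {x : X} (hx : x ∈ A) :
    ∫ y, f y ∂κ x ∈
      Icc (⨅ t : intervalFeasibleSet κ A P, ∑ j, lo j * (t : ι → ℝ) j)
        (⨆ t : intervalFeasibleSet κ A P, ∑ j, up j * (t : ι → ℝ) j) := by
  let t₀ : intervalFeasibleSet κ A P :=
    ⟨_, transitionProb_mem_intervalFeasibleSet hmeas hdisj hcover hx⟩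
  have hlp (c : ι → ℝ) := mem_Icc_ciInf_ciSup (fun t => abs_sum_mul_le_sum_abs c _ t.2.1) t₀
  have hint := integral_mem_Icc_of_mem_Icc_on_partition (μ := κ x) hmeas hdisj hcover
    hf.aestronglyMeasurable hbounds
  exact ⟨(hlp lo).1.trans hint.1, hint.2.trans (hlp up).2⟩

end IntervalFeasibleSet

theorem measurable_of_backward_recursion {X : Type*} [MeasurableSpace X] {H : ℕ}
    {T : ℕ → Kernel X X} {V : ℕ → X → ℝ} {a b : X → ℝ} (ha : Measurable a)
    (hb : Measurable b) (hVH : Measurable (V H))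
    (hVk : ∀ k < H, ∀ x, V k x = a x + b x * ∫ y, V (k + 1) y ∂T k x)
    {k : ℕ} (hk : k ≤ H) : Measurable (V k) := by
  induction hk using Nat.decreasingInduction with
  | self => exact hVH
  | of_succ k hk ih =>
    rw [show V k = _ from funext (hVk k hk)]
    exact ha.add (hb.mul ih.stronglyMeasurable.integral_kernel.measurable)

theorem imc_sandwich_bound_general
    {X : Type*} [MeasurableSpace X]
    -- the partition `X_1, …, X_{n_p}, X_{n_p+1}` of `X`
    (np : ℕ) (P : Fin (np + 1) → Set X)
    (hPmeas : ∀ i, MeasurableSet (P i))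
    (hPdisj : Pairwise (Function.onFun Disjoint P))
    (hPcover : ⋃ i, P i = Set.univ)
    -- unsafe region `X_u = X_{n_p+1}` and safe set `X_s`
    (Xu Xs : Set X)
    (hXu : Xu = P (Fin.last np))
    (hXs : Xs = Set.univ \ Xu)
    -- horizon and closed-loop Markov kernels under the fixed policy
    (H : ℕ)
    (T : ℕ → Kernel X X)
    (hT : ∀ k, IsMarkovKernel (T k))
    -- unsafety value functions `V_k`
    (V : ℕ → X → ℝ)
    (hVH : ∀ x, V H x = Xu.indicator (fun _ => (1 : ℝ)) x)
    (hVk : ∀ k < H, ∀ x,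
      V k x = Xu.indicator (fun _ => (1 : ℝ)) x +
        Xs.indicator (fun _ => (1 : ℝ)) x * ∫ y, V (k + 1) y ∂((T k) x))
    -- the interval feasible sets `F^i_k`
    (Fset : ℕ → Fin (np + 1) → Set (Fin (np + 1) → ℝ))
    (hFset : ∀ k < H, ∀ i : Fin (np + 1), i ≠ Fin.last np →
      Fset k i = {t | (∀ j, t j ∈ Set.Icc (0 : ℝ) 1) ∧
        (∀ j, (⨅ x : P i, ((T k) (x : X) (P j)).toReal) ≤ t j ∧
          t j ≤ ⨆ x : P i, ((T k) (x : X) (P j)).toReal) ∧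
        ∑ j, t j = 1})
    -- the supremum-LP values `γ̄_{k,i}`
    (γup : ℕ → Fin (np + 1) → ℝ)
    (hγupH : ∀ i, γup H i = ⨆ x : P i, Xu.indicator (fun _ => (1 : ℝ)) (x : X))
    (hγupk : ∀ k < H, ∀ i : Fin (np + 1), i ≠ Fin.last np → γup k i =
      ⨆ t : Fset k i, ∑ j, γup (k + 1) j * (t : Fin (np + 1) → ℝ) j)
    (hγuplast : ∀ k < H, γup k (Fin.last np) = 1)
    -- the infimum-LP values `γ^L_{k,i}`
    (γlo : ℕ → Fin (np + 1) → ℝ)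
    (hγloH : ∀ i, γlo H i = ⨅ x : P i, Xu.indicator (fun _ => (1 : ℝ)) (x : X))
    (hγlok : ∀ k < H, ∀ i : Fin (np + 1), i ≠ Fin.last np → γlo k i =
      ⨅ t : Fset k i, ∑ j, γlo (k + 1) j * (t : Fin (np + 1) → ℝ) j)
    (hγlolast : ∀ k < H, γlo k (Fin.last np) = 1)
    -- the piecewise-constant extensions
    (γupfun γlofun : ℕ → X → ℝ)
    (hγupfun : ∀ k, ∀ x, ∀ i : Fin (np + 1), x ∈ P i → γupfun k x = γup k i)
    (hγlofun : ∀ k, ∀ x, ∀ i : Fin (np + 1), x ∈ P i → γlofun k x = γlo k i) :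
    (∀ k ≤ H, ∀ x : X, γlofun k x ≤ V k x ∧ V k x ≤ γupfun k x) ∧
      ∀ x0 : X, (1 - V 0 x0) ∈ Set.Icc (1 - γupfun 0 x0) (1 - γlofun 0 x0) := by
  have hXu_meas : MeasurableSet Xu := hXu ▸ hPmeas _
  have hXs_meas : MeasurableSet Xs := hXs ▸ MeasurableSet.univ.diff hXu_meas
  have hV_meas : ∀ k ≤ H, Measurable (V k) := fun k =>
    measurable_of_backward_recursion (measurable_const.indicator hXu_meas)
      (measurable_const.indicator hXs_meas) (funext hVH ▸ measurable_const.indicator hXu_meas) hVk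
  have hcell : ∀ k ≤ H, ∀ i, ∀ x ∈ P i, V k x ∈ Icc (γlo k i) (γup k i) := by
    intro k hk
    induction hk using Nat.decreasingInduction with
    | self =>
      intro i x hx
      rw [hVH, hγupH, hγloH]
      exact mem_Icc_ciInf_ciSup (f := fun z : P i => Xu.indicator (fun _ => (1 : ℝ)) z) (C := 1)
        (fun z => by by_cases h : (z : X) ∈ Xu <;> simp [h]) ⟨x, hx⟩
    | of_succ k hk ih =>
      intro i x hx
      by_cases hi : i = Fin.last np
      · subst hi
        have hxu : x ∈ Xu := hXu ▸ hx
        rw [hVk k hk, hγuplast k hk, hγlolast k hk]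
        simp [hXs, hxu]
      · have hxu : x ∉ Xu := hXu ▸ (hPdisj hi).notMem_of_mem_left hx
        rw [hVk k hk, hγupk k hk i hi, hγlok k hk i hi,
          show Fset k i = intervalFeasibleSet (T k) (P i) P from hFset k hk i hi]
        simpa [hXs, hxu] using integral_mem_Icc_iInf_iSup_intervalFeasibleSet (κ := T k) hPmeas
          hPdisj hPcover (hV_meas (k + 1) hk) ih hx
  have hbounds : ∀ k ≤ H, ∀ x, γlofun k x ≤ V k x ∧ V k x ≤ γupfun k x := by
    intro k hk x
    obtain ⟨i, hi⟩ := mem_iUnion.1 (hPcover ▸ mem_univ x)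
    rw [hγlofun k x i hi, hγupfun k x i hi]
    exact hcell k hk i x hi
  refine ⟨hbounds, fun x0 => ?_⟩
  obtain ⟨hlo, hup⟩ := hbounds 0 H.zero_le x0
  exact ⟨by linarith, by linarith⟩

/-- **Sandwich bound from the two LP recursions:** with `γ^L_k` defined via the
infimum LP recursion and `γ̄_k` via the supremum LP recursion over the same
interval feasible sets `F^i_k`, for every `k ∈ {0,…,H}` and `x ∈ X` one has
`γ^L_k(x) ≤ V_k(x) ≤ γ̄_k(x)`; hence the probabilistic safety `1 - V_0(x₀)`
lies in `[1 - γ̄_0(x₀), 1 - γ^L_0(x₀)]` for every initial state `x₀`. -/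
theorem imc_sandwich_bound
    {X : Type*} [MeasurableSpace X] [StandardBorelSpace X]
    -- the partition `X_1, …, X_{n_p}, X_{n_p+1}` of `X`
    (np : ℕ) (P : Fin (np + 1) → Set X)
    (hPmeas : ∀ i, MeasurableSet (P i))
    (hPne : ∀ i, (P i).Nonempty)
    (hPdisj : Pairwise (Function.onFun Disjoint P))
    (hPcover : ⋃ i, P i = Set.univ)
    -- unsafe region `X_u = X_{n_p+1}` and safe set `X_s`
    (Xu Xs : Set X)
    (hXu : Xu = P (Fin.last np))
    (hXs : Xs = Set.univ \ Xu)
    -- horizon and closed-loop Markov kernels under the fixed policy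
    (H : ℕ)
    (T : ℕ → Kernel X X)
    (hT : ∀ k, IsMarkovKernel (T k))
    -- unsafety value functions `V_k`
    (V : ℕ → X → ℝ)
    (hVH : ∀ x, V H x = Xu.indicator (fun _ => (1 : ℝ)) x)
    (hVk : ∀ k < H, ∀ x,
      V k x = Xu.indicator (fun _ => (1 : ℝ)) x +
        Xs.indicator (fun _ => (1 : ℝ)) x * ∫ y, V (k + 1) y ∂((T k) x))
    -- the interval feasible sets `F^i_k`
    (Fset : ℕ → Fin (np + 1) → Set (Fin (np + 1) → ℝ))
    (hFset : ∀ k < H, ∀ i : Fin (np + 1), i ≠ Fin.last np →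
      Fset k i = {t | (∀ j, t j ∈ Set.Icc (0 : ℝ) 1) ∧
        (∀ j, (⨅ x : P i, ((T k) (x : X) (P j)).toReal) ≤ t j ∧
          t j ≤ ⨆ x : P i, ((T k) (x : X) (P j)).toReal) ∧
        ∑ j, t j = 1})
    -- the supremum-LP values `γ̄_{k,i}`
    (γup : ℕ → Fin (np + 1) → ℝ)
    (hγupH : ∀ i, γup H i = ⨆ x : P i, Xu.indicator (fun _ => (1 : ℝ)) (x : X))
    (hγupk : ∀ k < H, ∀ i : Fin (np + 1), i ≠ Fin.last np → γup k i =
      ⨆ t : Fset k i, ∑ j, γup (k + 1) j * (t : Fin (np + 1) → ℝ) j)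
    (hγuplast : ∀ k < H, γup k (Fin.last np) = 1)
    -- the infimum-LP values `γ^L_{k,i}`
    (γlo : ℕ → Fin (np + 1) → ℝ)
    (hγloH : ∀ i, γlo H i = ⨅ x : P i, Xu.indicator (fun _ => (1 : ℝ)) (x : X))
    (hγlok : ∀ k < H, ∀ i : Fin (np + 1), i ≠ Fin.last np → γlo k i =
      ⨅ t : Fset k i, ∑ j, γlo (k + 1) j * (t : Fin (np + 1) → ℝ) j)
    (hγlolast : ∀ k < H, γlo k (Fin.last np) = 1)
    -- the piecewise-constant extensions
    (γupfun γlofun : ℕ → X → ℝ)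
    (hγupfun : ∀ k, ∀ x, ∀ i : Fin (np + 1), x ∈ P i → γupfun k x = γup k i)
    (hγlofun : ∀ k, ∀ x, ∀ i : Fin (np + 1), x ∈ P i → γlofun k x = γlo k i) :
    (∀ k ≤ H, ∀ x : X, γlofun k x ≤ V k x ∧ V k x ≤ γupfun k x) ∧
      ∀ x0 : X, (1 - V 0 x0) ∈ Set.Icc (1 - γupfun 0 x0) (1 - γlofun 0 x0) :=
  imc_sandwich_bound_general np P hPmeas hPdisj hPcover Xu Xs hXu hXs H T hT V hVH hVk Fset hFset
    γup hγupH hγupk hγuplast γlo hγloH hγlok hγlolast γupfun γlofun hγupfun hγlofun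
end
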